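/- Suppose a = (a_1,…,a_n) ∈ ℝⁿ with 0 < a_1 ≤ a_2 ≤ … ≤ a_n and n ≥ 2, and let 1 ≤ k ≤ n−1. Then ξ̲_k(a) = k/n = ξ̄_k(a) holds if and only if a = C·(1,1,…,1) for some constant C > 0. -/

import Mathlib

open Finset Filter MeasureTheory Set

noncomputable def esymm (n : ℕ) (k : ℤ) (a : Fin n → ℝ) : ℝ :=
  if 0 ≤ k then
    ∑ s ∈ Finset.powersetCard k.toNat (Finset.univ : Finset (Fin n)), ∏ i ∈ s, a i
  else 0

noncomputable def esymmDel (n : ℕ) (k : ℤ) (i : Fin n) (a : Fin n → ℝ) : ℝ :=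
  if 0 ≤ k then
    ∑ s ∈ Finset.powersetCard k.toNat ((Finset.univ : Finset (Fin n)).erase i),
      ∏ j ∈ s, a j
  else 0

noncomputable def esymmDel2 (n : ℕ) (k : ℤ) (i j : Fin n) (a : Fin n → ℝ) : ℝ :=
  if 0 ≤ k then
    ∑ s ∈ Finset.powersetCard k.toNat
        (((Finset.univ : Finset (Fin n)).erase i).erase j),
      ∏ t ∈ s, a t
  else 0

noncomputable def Xi (n : ℕ) (k : ℤ) (a x : Fin n → ℝ) : ℝ :=
  (∑ i, esymmDel n (k - 1) i a * a i ^ 2 * x i ^ 2) /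
    (esymm n k a * ∑ i, a i * x i ^ 2)

noncomputable def xiSup (n : ℕ) (k : ℤ) (a : Fin n → ℝ) : ℝ :=
  sSup {y | ∃ x : Fin n → ℝ, x ≠ 0 ∧ Xi n k a x = y}

noncomputable def xiInf (n : ℕ) (k : ℤ) (a : Fin n → ℝ) : ℝ :=
  sInf {y | ∃ x : Fin n → ℝ, x ≠ 0 ∧ Xi n k a x = y}

noncomputable def mkl (n : ℕ) (k l : ℤ) (a : Fin n → ℝ) : ℝ :=
  ((k : ℝ) - (l : ℝ)) / (xiSup n k a - xiInf n l a)

def GammaK (n : ℕ) (k : ℤ) : Set (Fin n → ℝ) :=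
  {lam | ∀ j : ℤ, 1 ≤ j → j ≤ k → 0 < esymm n j lam}

noncomputable def hessian (n : ℕ) (f : (Fin n → ℝ) → ℝ) (x : Fin n → ℝ) :
    Matrix (Fin n) (Fin n) ℝ :=
  fun i j => fderiv ℝ (fun y => fderiv ℝ f y (Pi.single j 1)) x (Pi.single i 1)

def IsViscSubsol (n : ℕ) (k l : ℤ) (Ω : Set (Fin n → ℝ)) (u : (Fin n → ℝ) → ℝ) : Prop :=
  ∀ v : (Fin n → ℝ) → ℝ, ContDiffOn ℝ 2 v Ω →
    ∀ x₀ ∈ Ω, (∀ x ∈ Ω, u x ≤ v x) → v x₀ = u x₀ →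
      ∀ hH : (hessian n v x₀).IsHermitian,
        esymm n l hH.eigenvalues ≤ esymm n k hH.eigenvalues

def IsViscSupersol (n : ℕ) (k l : ℤ) (Ω : Set (Fin n → ℝ)) (u : (Fin n → ℝ) → ℝ) : Prop :=
  ∀ v : (Fin n → ℝ) → ℝ, ContDiffOn ℝ 2 v Ω →
    (∀ x ∈ Ω, ∀ hH : (hessian n v x).IsHermitian,
      hH.eigenvalues ∈ closure (GammaK n k)) →
    ∀ x₀ ∈ Ω, (∀ x ∈ Ω, v x ≤ u x) → v x₀ = u x₀ →
      ∀ hH : (hessian n v x₀).IsHermitian,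
        esymm n k hH.eigenvalues ≤ esymm n l hH.eigenvalues

def IsViscSol (n : ℕ) (k l : ℤ) (Ω : Set (Fin n → ℝ)) (u : (Fin n → ℝ) → ℝ) : Prop :=
  IsViscSubsol n k l Ω u ∧ IsViscSupersol n k l Ω u

def SolvesODE (n : ℕ) (k l : ℤ) (a : Fin n → ℝ) (β : ℝ) (ψ : ℝ → ℝ) : Prop :=
  ContDiffOn ℝ (⊤ : ℕ∞) ψ (Set.Ici 1) ∧ ψ 1 = β ∧
  ∀ r : ℝ, 1 < r →
    ψ r ^ k + xiSup n k a * r * ψ r ^ (k - 1) * deriv ψ r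
      - ψ r ^ l - xiInf n l a * r * ψ r ^ (l - 1) * deriv ψ r = 0


section AuxForXi

lemma prodsum_pos {n : ℕ} (s : Finset (Fin n)) (m : ℕ) (hm : m ≤ s.card) (a : Fin n → ℝ)
    (hpos : ∀ i, 0 < a i) : 0 < ∑ t ∈ s.powersetCard m, ∏ j ∈ t, a j := by
  apply Finset.sum_pos
  · intro t _
    exact Finset.prod_pos fun j _ => hpos j
  · exact Finset.powersetCard_nonempty.2 hm

lemma prodsum_insert {n : ℕ} (s : Finset (Fin n)) (i : Fin n) (hi : i ∉ s) (m : ℕ)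
    (a : Fin n → ℝ) :
    ∑ t ∈ (insert i s).powersetCard (m + 1), ∏ j ∈ t, a j
      = ∑ t ∈ s.powersetCard (m + 1), ∏ j ∈ t, a j
        + a i * ∑ t ∈ s.powersetCard m, ∏ j ∈ t, a j := by
  rw [Finset.powersetCard_succ_insert hi, Finset.sum_union]
  · congr 1
    rw [Finset.sum_image, Finset.mul_sum]
    · exact Finset.sum_congr rfl fun t ht => Finset.prod_insert
        (fun h => hi ((Finset.mem_powersetCard.1 ht).1 h))
    · intro t ht u hu h
      have hti : i ∉ t := fun h' => hi ((Finset.mem_powersetCard.1 ht).1 h')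
      have hui : i ∉ u := fun h' => hi ((Finset.mem_powersetCard.1 hu).1 h')
      rw [← Finset.erase_insert hti, ← Finset.erase_insert hui, h]
  · rw [Finset.disjoint_left]
    intro t ht htm
    obtain ⟨u, _, rfl⟩ := Finset.mem_image.1 htm
    exact hi ((Finset.mem_powersetCard.1 ht).1 (Finset.mem_insert_self i u))

lemma prodsum_const' {n : ℕ} (s : Finset (Fin n)) (m : ℕ) (a : Fin n → ℝ) (C : ℝ)
    (h : ∀ i, a i = C) :
    ∑ t ∈ s.powersetCard m, ∏ j ∈ t, a j = (s.card.choose m : ℝ) * C ^ m := by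
  rw [Finset.sum_congr rfl (fun t ht => ?_), Finset.sum_const, Finset.card_powersetCard,
    nsmul_eq_mul]
  rw [show ∏ j ∈ t, a j = ∏ _j ∈ t, C from Finset.prod_congr rfl (fun j _ => h j),
    Finset.prod_const, (Finset.mem_powersetCard.1 ht).2]

lemma esymm_natCast (n k : ℕ) (a : Fin n → ℝ) :
    esymm n (k : ℤ) a
      = ∑ t ∈ Finset.powersetCard k (Finset.univ : Finset (Fin n)), ∏ j ∈ t, a j := by
  simp [esymm]

lemma esymmDel_natCast (n k : ℕ) (i : Fin n) (a : Fin n → ℝ) :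
    esymmDel n (k : ℤ) i a
      = ∑ t ∈ Finset.powersetCard k ((Finset.univ : Finset (Fin n)).erase i),
          ∏ j ∈ t, a j := by
  simp [esymmDel]

lemma sum_single_sq (n : ℕ) (i : Fin n) (f : Fin n → ℝ) :
    ∑ j, f j * ((Pi.single i 1 : Fin n → ℝ) j) ^ 2 = f i := by
  rw [Finset.sum_eq_single i]
  · simp
  · intro j _ hj
    simp [Pi.single_eq_of_ne hj]
  · simp

lemma Xi_single (n : ℕ) (k : ℤ) (a : Fin n → ℝ) (i : Fin n) (ha : a i ≠ 0) :
    Xi n k a (Pi.single i 1) = esymmDel n (k - 1) i a * a i / esymm n k a := by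
  unfold Xi
  have h1 : ∑ j, esymmDel n (k - 1) j a * a j ^ 2 * ((Pi.single i 1 : Fin n → ℝ) j) ^ 2
      = esymmDel n (k - 1) i a * a i ^ 2 := sum_single_sq n i _
  have h2 : ∑ j, a j * ((Pi.single i 1 : Fin n → ℝ) j) ^ 2 = a i := sum_single_sq n i _
  rw [h1, h2,
    show esymmDel n (k - 1) i a * a i ^ 2 = esymmDel n (k - 1) i a * a i * a i by ring,
    mul_div_mul_right _ _ ha]

end AuxForXi

/-- **Lemma 2.3, equation (2.4).** For `0 < a_1 ≤ … ≤ a_n` and `1 ≤ k ≤ n-1`,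
`ξ̲_k(a) = k/n = ξ̄_k(a)` holds iff `a = C·(1,…,1)` for some `C > 0`. -/
theorem xiInf_eq_xiSup_iff_const
    (n : ℕ) (hn : 2 ≤ n) (a : Fin n → ℝ)
    (hpos : ∀ i, 0 < a i) (hmono : Monotone a)
    (k : ℕ) (hk1 : 1 ≤ k) (hkn : k < n) :
    (xiInf n (k : ℤ) a = (k : ℝ) / (n : ℝ) ∧ xiSup n (k : ℤ) a = (k : ℝ) / (n : ℝ))
      ↔ ∃ C : ℝ, 0 < C ∧ ∀ i, a i = C := by
  have hnR : (0:ℝ) < (n:ℝ) := by positivity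
  have hkR : (0:ℝ) < (k:ℝ) := by exact_mod_cast hk1
  have hfrac : (0:ℝ) < (k:ℝ)/(n:ℝ) := div_pos hkR hnR
  have hcast1 : ((k:ℤ) - 1) = ((k - 1 : ℕ) : ℤ) := by omega
  constructor
  · rintro ⟨hInf, hSup⟩
    have hSup' : sSup {y | ∃ x : Fin n → ℝ, x ≠ 0 ∧ Xi n (k:ℤ) a x = y} = (k:ℝ)/(n:ℝ) := hSup
    have hInf' : sInf {y | ∃ x : Fin n → ℝ, x ≠ 0 ∧ Xi n (k:ℤ) a x = y} = (k:ℝ)/(n:ℝ) := hInf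
    have hbA : BddAbove {y | ∃ x : Fin n → ℝ, x ≠ 0 ∧ Xi n (k:ℤ) a x = y} := by
      by_contra h
      rw [csSup_of_not_bddAbove h, Real.sSup_empty] at hSup'
      exact absurd hSup'.symm (ne_of_gt hfrac)
    have hbB : BddBelow {y | ∃ x : Fin n → ℝ, x ≠ 0 ∧ Xi n (k:ℤ) a x = y} := by
      by_contra h
      rw [csInf_of_not_bddBelow h, Real.sInf_empty] at hInf'
      exact absurd hInf'.symm (ne_of_gt hfrac)
    have hval : ∀ y ∈ {y | ∃ x : Fin n → ℝ, x ≠ 0 ∧ Xi n (k:ℤ) a x = y},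
        y = (k:ℝ)/(n:ℝ) := fun y hy =>
      le_antisymm (hSup' ▸ le_csSup hbA hy) (hInf' ▸ csInf_le hbB hy)
    have hE : 0 < esymm n (k:ℤ) a := by
      rw [esymm_natCast]
      exact prodsum_pos _ _ (by simpa using hkn.le) a hpos
    have hXi : ∀ i : Fin n,
        esymmDel n ((k:ℤ) - 1) i a * a i / esymm n (k:ℤ) a = (k:ℝ)/(n:ℝ) := by
      intro i
      rw [← Xi_single n (k:ℤ) a i (ne_of_gt (hpos i))]
      apply hval
      refine ⟨Pi.single i 1, ?_, rfl⟩
      intro h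
      have h0 := congrFun h i
      simp at h0
    have hD : ∀ i : Fin n,
        esymmDel n ((k:ℤ) - 1) i a * a i = (k:ℝ)/(n:ℝ) * esymm n (k:ℤ) a := by
      intro i
      have h := hXi i
      rwa [div_eq_iff hE.ne'] at h
    have key : ∀ i j : Fin n, i ≠ j → a i = a j := by
      intro i j hij
      have hD' : esymmDel n ((k:ℤ)-1) i a * a i = esymmDel n ((k:ℤ)-1) j a * a j := by
        rw [hD i, hD j]
      rcases Nat.lt_or_ge k 2 with hk2 | hk2
      · have h0 : ((k:ℤ) - 1) = ((0:ℕ) : ℤ) := by omega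
        rw [h0, esymmDel_natCast, esymmDel_natCast] at hD'
        simpa using hD'
      · have hjmem : j ∈ (Finset.univ : Finset (Fin n)).erase i :=
          Finset.mem_erase.2 ⟨hij.symm, Finset.mem_univ j⟩
        have himem : i ∈ (Finset.univ : Finset (Fin n)).erase j :=
          Finset.mem_erase.2 ⟨hij, Finset.mem_univ i⟩
        have hiT : i ∉ ((Finset.univ : Finset (Fin n)).erase i).erase j :=
          fun h => Finset.notMem_erase i Finset.univ (Finset.mem_of_mem_erase h)
        have hjT : j ∉ ((Finset.univ : Finset (Fin n)).erase i).erase j :=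
          Finset.notMem_erase j _
        have hTi : (Finset.univ : Finset (Fin n)).erase i
            = insert j (((Finset.univ : Finset (Fin n)).erase i).erase j) :=
          (Finset.insert_erase hjmem).symm
        have hTj : (Finset.univ : Finset (Fin n)).erase j
            = insert i (((Finset.univ : Finset (Fin n)).erase i).erase j) := by
          have h := (Finset.insert_erase himem).symm
          rwa [Finset.erase_right_comm] at h
        have hkk : k - 1 = (k - 2) + 1 := by omega
        have hdI : esymmDel n ((k:ℤ)-1) i a
            = (∑ t ∈ (((Finset.univ : Finset (Fin n)).erase i).erase j).powersetCard (k-1),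
                ∏ l ∈ t, a l)
              + a j * ∑ t ∈ (((Finset.univ : Finset (Fin n)).erase i).erase j).powersetCard (k-2),
                ∏ l ∈ t, a l := by
          rw [hcast1, esymmDel_natCast, hkk]
          conv_lhs => rw [hTi]
          rw [prodsum_insert _ j hjT (k-2) a]
        have hdJ : esymmDel n ((k:ℤ)-1) j a
            = (∑ t ∈ (((Finset.univ : Finset (Fin n)).erase i).erase j).powersetCard (k-1),
                ∏ l ∈ t, a l)
              + a i * ∑ t ∈ (((Finset.univ : Finset (Fin n)).erase i).erase j).powersetCard (k-2),
                ∏ l ∈ t, a l := by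
          rw [hcast1, esymmDel_natCast, hkk]
          conv_lhs => rw [hTj]
          rw [prodsum_insert _ i hiT (k-2) a]
        have hPpos : 0 < ∑ t ∈ (((Finset.univ : Finset (Fin n)).erase i).erase j).powersetCard (k-1),
            ∏ l ∈ t, a l := by
          apply prodsum_pos _ _ ?_ a hpos
          rw [Finset.card_erase_of_mem hjmem, Finset.card_erase_of_mem (Finset.mem_univ i),
            Finset.card_univ, Fintype.card_fin]
          omega
        rw [hdI, hdJ] at hD'
        have hz : (a i - a j)
            * (∑ t ∈ (((Finset.univ : Finset (Fin n)).erase i).erase j).powersetCard (k-1),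
                ∏ l ∈ t, a l) = 0 := by
          linear_combination hD'
        rcases mul_eq_zero.1 hz with h | h
        · exact sub_eq_zero.1 h
        · exact absurd h (ne_of_gt hPpos)
    refine ⟨a ⟨0, by omega⟩, hpos _, fun i => ?_⟩
    rcases eq_or_ne i ⟨0, by omega⟩ with h | h
    · rw [h]
    · exact key i _ h
  · rintro ⟨C, hC, hCa⟩
    have hXiC : ∀ x : Fin n → ℝ, x ≠ 0 → Xi n (k:ℤ) a x = (k:ℝ)/(n:ℝ) := by
      intro x hx
      have hS2 : 0 < ∑ i, x i ^ 2 := by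
        obtain ⟨i, hi⟩ := Function.ne_iff.1 hx
        simp only [Pi.zero_apply] at hi
        exact Finset.sum_pos' (fun j _ => sq_nonneg _)
          ⟨i, Finset.mem_univ i, by positivity⟩
      have hEd : ∀ i : Fin n, esymmDel n ((k:ℤ)-1) i a
          = (((n-1).choose (k-1) : ℕ) : ℝ) * C^(k-1) := by
        intro i
        rw [hcast1, esymmDel_natCast, prodsum_const' _ _ a C hCa,
          Finset.card_erase_of_mem (Finset.mem_univ i), Finset.card_univ, Fintype.card_fin]
      have hEe : esymm n (k:ℤ) a = ((n.choose k : ℕ) : ℝ) * C^k := by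
        rw [esymm_natCast, prodsum_const' _ _ a C hCa, Finset.card_univ, Fintype.card_fin]
      unfold Xi
      have hnum : ∑ i, esymmDel n ((k:ℤ)-1) i a * a i ^ 2 * x i ^ 2
          = (((n-1).choose (k-1) : ℕ) : ℝ) * C^(k-1) * C^2 * ∑ i, x i ^ 2 := by
        rw [Finset.mul_sum]
        exact Finset.sum_congr rfl fun i _ => by rw [hEd i, hCa i]
      have hden : ∑ i, a i * x i ^ 2 = C * ∑ i, x i ^ 2 := by
        rw [Finset.mul_sum]
        exact Finset.sum_congr rfl fun i _ => by rw [hCa i]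
      rw [hnum, hden, hEe]
      have hch : (0:ℝ) < ((n.choose k : ℕ) : ℝ) := by
        exact_mod_cast Nat.choose_pos hkn.le
      rw [div_eq_div_iff (by positivity) hnR.ne']
      have hid : (n:ℝ) * (((n-1).choose (k-1) : ℕ) : ℝ) = (k:ℝ) * ((n.choose k : ℕ) : ℝ) := by
        have h := Nat.add_one_mul_choose_eq (n-1) (k-1)
        have h1 : n - 1 + 1 = n := by omega
        have h2 : k - 1 + 1 = k := by omega
        rw [h1, h2] at h
        have h3 : n * (n-1).choose (k-1) = k * n.choose k := by rw [h]; ring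
        exact_mod_cast h3
      have hC1 : C^(k-1) * C^2 = C * C^k := by
        rw [← pow_add, ← pow_succ']
        congr 1
        omega
      linear_combination (C^(k-1) * C^2 * (∑ i, x i ^ 2)) * hid
        + ((k:ℝ) * ((n.choose k : ℕ) : ℝ) * (∑ i, x i ^ 2)) * hC1
    have hone : (fun _ : Fin n => (1:ℝ)) ≠ 0 := by
      intro h
      have h0 := congrFun h ⟨0, by omega⟩
      simp at h0
    have hSet : {y | ∃ x : Fin n → ℝ, x ≠ 0 ∧ Xi n (k:ℤ) a x = y} = {(k:ℝ)/(n:ℝ)} := by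
      ext y
      simp only [Set.mem_setOf_eq, Set.mem_singleton_iff]
      constructor
      · rintro ⟨x, hx, rfl⟩
        exact hXiC x hx
      · rintro rfl
        exact ⟨_, hone, hXiC _ hone⟩
    constructor
    · show sInf {y | ∃ x : Fin n → ℝ, x ≠ 0 ∧ Xi n (k:ℤ) a x = y} = (k:ℝ)/(n:ℝ)
      rw [hSet, csInf_singleton]
    · show sSup {y | ∃ x : Fin n → ℝ, x ≠ 0 ∧ Xi n (k:ℤ) a x = y} = (k:ℝ)/(n:ℝ)
      rw [hSet, csSup_singleton]
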